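/- arXiv:1406.0951 — 2 statements merged into one kernel-verified Lean document; each statement's English description precedes it below -/
import Mathlib

section
/- There exists a bounded linear operator T on ℓ²(ℤ) and nontrivial closed subspaces M₁ and M₂ such that T is M₁-hypercyclic and its Hilbert-space adjoint T* is M₂-hypercyclic. -/
/-!
Take `T = 2 (B - e₋₁ ⊗ e₀)`, where `(B x) n = x (n + 1)` is the backward shift on `ℓ²(ℤ)`: the
shift with the link from coordinate `0` to `-1` cut. On `M₊`, the sequences vanishing on `n < 0`,
`T` is Rolewicz's operator `2B`; on `M₋`, the sequences vanishing on `n ≥ 0`, the adjoint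
`T* = 2 (B⁻¹ - e₀ ⊗ e₋₁)` is the same operator read from `-1` downwards. In both cases
`S = ½ B⁻¹` (resp. `½ B`) is a right inverse on the subspace with `Sⁿ → 0`, and every finitely
supported vector of the subspace is killed by a power of the operator. Kitai's argument makes the
operator topologically transitive on the closed subspace, and Birkhoff's transitivity theorem
(Baire category in the subspace) yields a vector whose orbit is dense in it.
-/

open Filter Topology Set TopologicalSpace InnerProductSpace
open scoped ENNReal lp

noncomputable section

def TopologicallyTransitiveOn {X : Type*} [TopologicalSpace X] (f : X → X) (M : Set X) : Prop :=
  ∀ U V : Set X, IsOpen U → IsOpen V → (U ∩ M).Nonempty → (V ∩ M).Nonempty →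
    ∃ n, (U ∩ M ∩ f^[n] ⁻¹' V).Nonempty

-- Birkhoff: the points with dense orbit form the dense `G_δ` set `⋂ V ∈ B, ⋃ n, f^[n] ⁻¹' V`.
theorem TopologicallyTransitiveOn.exists_denseRange_iterate {Y : Type*} [TopologicalSpace Y]
    [BaireSpace Y] [SecondCountableTopology Y] [Nonempty Y] {f : Y → Y}
    (htrans : TopologicallyTransitiveOn f univ) (hf : Continuous f) :
    ∃ x, DenseRange fun n => f^[n] x := by
  obtain ⟨B, hBc, hB0, hB⟩ := exists_countable_basis Y
  have hdense : Dense (⋂ V ∈ B, ⋃ n, f^[n] ⁻¹' V) := by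
    refine dense_biInter_of_isOpen (fun V hV => isOpen_iUnion fun n =>
      (hB.isOpen hV).preimage (hf.iterate n)) hBc fun V hV => ?_
    refine dense_iff_inter_open.2 fun U hU hUne => ?_
    obtain ⟨n, x, ⟨hxU, -⟩, hxV⟩ := htrans U V hU (hB.isOpen hV) (by simpa using hUne)
      (by simpa using nonempty_iff_ne_empty.2 fun h => hB0 (h ▸ hV))
    exact ⟨x, hxU, mem_iUnion.2 ⟨n, hxV⟩⟩
  obtain ⟨x, hx⟩ := hdense.nonempty
  refine ⟨x, hB.dense_iff.2 fun V hV _ => ?_⟩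
  obtain ⟨n, hn⟩ := mem_iUnion.1 (mem_iInter₂.1 hx V hV)
  exact ⟨_, hn, n, rfl⟩

theorem TopologicallyTransitiveOn.restrict {X : Type*} [TopologicalSpace X] {f : X → X}
    {M : Set X} (htrans : TopologicallyTransitiveOn f M) (hfM : MapsTo f M M) :
    TopologicallyTransitiveOn (hfM.restrict f M M) univ := by
  rintro _ _ ⟨U, hU, rfl⟩ ⟨V, hV, rfl⟩ ⟨⟨u, hu⟩, huU, -⟩ ⟨⟨v, hv⟩, hvV, -⟩
  obtain ⟨n, y, ⟨hyU, hyM⟩, hyV⟩ := htrans U V hU hV ⟨u, huU, hu⟩ ⟨v, hvV, hv⟩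
  refine ⟨n, ⟨y, hyM⟩, ⟨hyU, trivial⟩, ?_⟩
  simpa [hfM.iterate_restrict] using hyV

theorem TopologicallyTransitiveOn.exists_orbit_dense_in {X : Type*} [PseudoEMetricSpace X]
    [CompleteSpace X] [SecondCountableTopology X] {f : X → X} {M : Set X}
    (htrans : TopologicallyTransitiveOn f M) (hf : Continuous f) (hM : IsClosed M)
    (hMne : M.Nonempty) (hfM : MapsTo f M M) : ∃ x, M ⊆ closure ({y | ∃ n, f^[n] x = y} ∩ M) := by
  have := hM.completeSpace_coe
  have := hMne.to_subtype
  obtain ⟨⟨x, hxM⟩, hx⟩ := (htrans.restrict hfM).exists_denseRange_iterate (hf.restrict hfM)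
  refine ⟨x, fun y hy => ?_⟩
  have : (⟨y, hy⟩ : M) ∈ closure (range fun n => (hfM.restrict f M M)^[n] ⟨x, hxM⟩) :=
    hx.closure_range ▸ trivial
  refine closure_mono ?_ (image_closure_subset_closure_image continuous_subtype_val ⟨_, this, rfl⟩)
  rintro _ ⟨_, ⟨n, rfl⟩, rfl⟩
  simp only [hfM.iterate_restrict]
  exact ⟨⟨n, rfl⟩, hfM.iterate n hxM⟩

namespace ContinuousLinearMap

variable {𝕜 E : Type*} [NontriviallyNormedField 𝕜] [NormedAddCommGroup E] [NormedSpace 𝕜 E]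

theorem pow_apply_mem {S : E →L[𝕜] E} {M : Set E} (hSM : MapsTo S M M) (n : ℕ) {y : E}
    (hy : y ∈ M) : (S ^ n) y ∈ M :=
  FunLike.coe_pow_eq_iterate S n ▸ hSM.iterate n hy

theorem pow_apply_pow_apply_of_rightInvOn {T S : E →L[𝕜] E} {M : Set E} (hSM : MapsTo S M M)
    (hTS : ∀ y ∈ M, T (S y) = y) (n : ℕ) {y : E} (hy : y ∈ M) : (T ^ n) ((S ^ n) y) = y := by
  induction n with
  | zero => rfl
  | succ n ih =>
    rw [pow_succ, pow_succ', mul_apply_eq_comp, mul_apply_eq_comp,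
      hTS _ (pow_apply_mem hSM n hy), ih]

-- `u + Sⁿ v` is close to `u` while `Tⁿ (u + Sⁿ v) = Tⁿ u + v` is close to `v`.
theorem topologicallyTransitiveOn_of_rightInvOn {T S : E →L[𝕜] E} {M : Submodule 𝕜 E}
    (hSM : MapsTo S M M) (hTS : ∀ y ∈ M, T (S y) = y)
    (hS : ∀ y ∈ M, Tendsto (fun n => (S ^ n) y) atTop (𝓝 0))
    (hD : (M : Set E) ⊆ closure {u ∈ M | Tendsto (fun n => (T ^ n) u) atTop (𝓝 0)}) :
    TopologicallyTransitiveOn T M := by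
  rintro U V hU hV ⟨u₀, hu₀U, hu₀M⟩ ⟨v, hvV, hvM⟩
  obtain ⟨u, huU, huM, hTu⟩ := mem_closure_iff.1 (hD hu₀M) U hU hu₀U
  have hx : Tendsto (fun n => u + (S ^ n) v) atTop (𝓝 u) := by
    simpa using tendsto_const_nhds.add (hS v hvM)
  have hTx : Tendsto (fun n => (T ^ n) (u + (S ^ n) v)) atTop (𝓝 v) := by
    simp only [map_add, pow_apply_pow_apply_of_rightInvOn hSM hTS _ hvM]
    simpa using hTu.add (tendsto_const_nhds (x := v))
  obtain ⟨n, hxU, hTxV⟩ := ((hx.eventually (hU.mem_nhds huU)).and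
    (hTx.eventually (hV.mem_nhds hvV))).exists
  refine ⟨n, u + (S ^ n) v, ⟨hxU, M.add_mem huM (pow_apply_mem hSM n hvM)⟩, ?_⟩
  rwa [mem_preimage, ← FunLike.coe_pow_eq_iterate]

theorem exists_orbit_dense_in_of_rightInvOn [CompleteSpace E] [SecondCountableTopology E]
    {T S : E →L[𝕜] E} {M : Submodule 𝕜 E} (hM : IsClosed (M : Set E)) (hTM : MapsTo T M M)
    (hSM : MapsTo S M M) (hTS : ∀ y ∈ M, T (S y) = y)
    (hS : ∀ y ∈ M, Tendsto (fun n => (S ^ n) y) atTop (𝓝 0))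
    (hD : (M : Set E) ⊆ closure {u ∈ M | Tendsto (fun n => (T ^ n) u) atTop (𝓝 0)}) :
    ∃ x, (M : Set E) ⊆ closure ({y | ∃ n : ℕ, (T ^ n) x = y} ∩ M) := by
  obtain ⟨x, hx⟩ := (topologicallyTransitiveOn_of_rightInvOn hSM hTS hS hD).exists_orbit_dense_in
    T.continuous hM ⟨0, M.zero_mem⟩ hTM
  exact ⟨x, by simpa only [FunLike.coe_pow_eq_iterate] using hx⟩

theorem tendsto_pow_apply_zero_of_pow_apply_eq_zero {T : E →L[𝕜] E} {x : E} {m : ℕ}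
    (h : (T ^ m) x = 0) : Tendsto (fun n => (T ^ n) x) atTop (𝓝 0) :=
  tendsto_const_nhds.congr' <| (eventually_ge_atTop m).mono fun n hn => by
    dsimp only
    rw [← Nat.sub_add_cancel hn, pow_add, mul_apply_eq_comp, h, map_zero]

theorem tendsto_pow_apply_zero_of_norm_lt_one {S : E →L[𝕜] E} (hS : ‖S‖ < 1) (y : E) :
    Tendsto (fun n => (S ^ n) y) atTop (𝓝 0) := by
  have := ((apply 𝕜 E y).continuous.tendsto 0).comp (tendsto_pow_atTop_nhds_zero_of_norm_lt_one hS)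
  rwa [map_zero] at this

end ContinuousLinearMap

theorem LinearIsometryEquiv.norm_smul_toContinuousLinearMap_lt_one {𝕜 E : Type*}
    [NontriviallyNormedField 𝕜] [NormedAddCommGroup E] [NormedSpace 𝕜 E] (e : E ≃ₗᵢ[𝕜] E) {c : 𝕜}
    (hc : ‖c‖ < 1) : ‖c • (e : E →L[𝕜] E)‖ < 1 :=
  calc ‖c • (e : E →L[𝕜] E)‖ ≤ ‖c‖ * 1 := (norm_smul_le _ _).trans <| by
        gcongr; exact LinearIsometry.norm_toContinuousLinearMap_le _
    _ < 1 := by simpa using hc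

namespace lp

section SupportedOn

variable {α 𝕜 : Type*} {E : α → Type*} {p : ℝ≥0∞} [NormedField 𝕜] [∀ i, NormedAddCommGroup (E i)]
  [∀ i, NormedSpace 𝕜 (E i)]

variable (𝕜 E p) in
def supportedOn (s : Set α) : Submodule 𝕜 (lp E p) where
  carrier := {f | ∀ i ∉ s, f i = 0}
  add_mem' hf hg i hi := by simp [hf i hi, hg i hi]
  zero_mem' _ _ := rfl
  smul_mem' c f hf i hi := by simp [hf i hi]

theorem isClosed_supportedOn [Fact (1 ≤ p)] (s : Set α) :
    IsClosed (supportedOn 𝕜 E p s : Set (lp E p)) := by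
  simp only [SetLike.coe, supportedOn, ofPred_forall]
  exact isClosed_biInter fun i _ =>
    isClosed_eq (lipschitzWith_one_eval p i).continuous continuous_const

variable [DecidableEq α]

theorem single_mem_supportedOn {s : Set α} {i : α} (hi : i ∈ s) (a : E i) :
    lp.single p i a ∈ supportedOn 𝕜 E p s := fun _ hj =>
  lp.single_apply_ne p i a (ne_of_mem_of_not_mem hi hj).symm

theorem single_apply_mem_supportedOn {s : Set α} {f : lp E p} (hf : f ∈ supportedOn 𝕜 E p s)
    (i : α) : lp.single p i (f i) ∈ supportedOn 𝕜 E p s := by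
  by_cases hi : i ∈ s
  · exact single_mem_supportedOn hi _
  · rw [hf i hi, lp.single_zero]
    exact Submodule.zero_mem _

theorem supportedOn_ne_bot [∀ i, Nontrivial (E i)] {s : Set α} (hs : s.Nonempty) :
    supportedOn 𝕜 E p s ≠ ⊥ := by
  obtain ⟨i, hi⟩ := hs
  obtain ⟨a, ha⟩ := exists_ne (0 : E i)
  refine (Submodule.ne_bot_iff _).2 ⟨_, single_mem_supportedOn hi a, fun h => ha ?_⟩
  simpa using congr_arg (· i) h

theorem supportedOn_ne_top [∀ i, Nontrivial (E i)] {s : Set α} {i : α} (hi : i ∉ s) :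
    supportedOn 𝕜 E p s ≠ ⊤ := by
  obtain ⟨a, ha⟩ := exists_ne (0 : E i)
  intro h
  have := (h ▸ Submodule.mem_top : lp.single p i a ∈ supportedOn 𝕜 E p s) i hi
  exact ha (by simpa using this)

theorem mem_closure_of_sum_single_mem [Fact (1 ≤ p)] (hp : p ≠ ∞) {S : Set (lp E p)} {f : lp E p}
    (hS : ∀ F : Finset α, ∑ i ∈ F, lp.single p i (f i) ∈ S) : f ∈ closure S :=
  mem_closure_of_tendsto (lp.hasSum_single hp f) (Eventually.of_forall hS)

theorem supportedOn_subset_closure_tendsto_pow_apply_zero [Fact (1 ≤ p)] (hp : p ≠ ∞)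
    {s : Set α} {T : lp E p →L[𝕜] lp E p}
    (hT : ∀ i ∈ s, ∀ a : E i, Tendsto (fun n => (T ^ n) (lp.single p i a)) atTop (𝓝 0)) :
    (supportedOn 𝕜 E p s : Set (lp E p)) ⊆
      closure {u ∈ supportedOn 𝕜 E p s | Tendsto (fun n => (T ^ n) u) atTop (𝓝 0)} := by
  intro f hf
  refine mem_closure_of_sum_single_mem hp fun F => ⟨Submodule.sum_mem _ fun i _ =>
    single_apply_mem_supportedOn hf i, ?_⟩
  simp only [map_sum]
  rw [← F.sum_const_zero]
  refine tendsto_finsetSum F fun i _ => ?_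
  by_cases hi : i ∈ s
  · exact hT i hi (f i)
  · simp [hf i hi]

end SupportedOn

theorem separableSpace {α 𝕜 : Type*} [Countable α] [NontriviallyNormedField 𝕜] [SeparableSpace 𝕜]
    {p : ℝ≥0∞} [Fact (1 ≤ p)] (hp : p ≠ ∞) : SeparableSpace (lp (fun _ : α => 𝕜) p) := by
  classical
  have hsingles := countable_range fun i => lp.single (E := fun _ : α => 𝕜) p i 1
  refine isSeparable_univ_iff.1 <| (hsingles.isSeparable.span (R := 𝕜)).closure.mono fun f _ =>
    mem_closure_of_sum_single_mem hp fun F => Submodule.sum_mem _ fun i _ => ?_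
  have := Submodule.smul_mem (Submodule.span 𝕜 _) (f i) (Submodule.subset_span (mem_range_self
    (f := fun i => lp.single (E := fun _ : α => 𝕜) p i 1) i))
  rwa [← lp.single_smul, smul_eq_mul, mul_one] at this

section Reindex

variable {α β 𝕜 E : Type*} [NormedField 𝕜] [NormedAddCommGroup E] [NormedSpace 𝕜 E]

def reindex (e : α ≃ β) : ℓ²(β, E) ≃ₗᵢ[𝕜] ℓ²(α, E) where
  toFun f := ⟨f ∘ e, memℓp_gen <| e.summable_iff.2 <| (lp.memℓp f).summable (by norm_num)⟩
  invFun f :=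
    ⟨f ∘ e.symm, memℓp_gen <| e.symm.summable_iff.2 <| (lp.memℓp f).summable (by norm_num)⟩
  left_inv f := by ext; simp
  right_inv f := by ext; simp
  map_add' f g := rfl
  map_smul' c f := rfl
  norm_map' f := by
    simp only [lp.norm_eq_tsum_rpow (by norm_num : 0 < (2 : ℝ≥0∞).toReal)]
    congr 1
    exact e.tsum_eq fun i => ‖f i‖ ^ (2 : ℝ≥0∞).toReal

end Reindex

end lp

open ContinuousLinearMap (adjoint)

def backwardShift : ℓ²(ℤ, ℂ) ≃ₗᵢ[ℂ] ℓ²(ℤ, ℂ) := lp.reindex (Equiv.addRight 1)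

theorem backwardShift_apply (x : ℓ²(ℤ, ℂ)) (n : ℤ) : backwardShift x n = x (n + 1) := rfl

theorem backwardShift_symm_apply (x : ℓ²(ℤ, ℂ)) (n : ℤ) : backwardShift.symm x n = x (n - 1) := rfl

-- Written with `rankOne` so that its adjoint is a formal computation (`adjoint_cutShift`).
def cutShift : ℓ²(ℤ, ℂ) →L[ℂ] ℓ²(ℤ, ℂ) :=
  (2 : ℂ) • ((backwardShift : ℓ²(ℤ, ℂ) →L[ℂ] ℓ²(ℤ, ℂ)) -
    rankOne ℂ (lp.single 2 (-1) 1) (lp.single 2 0 1))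

theorem cutShift_apply (x : ℓ²(ℤ, ℂ)) (n : ℤ) :
    cutShift x n = 2 * (x (n + 1) - if n = -1 then x 0 else 0) := by
  rw [cutShift, smul_apply, sub_apply, lp.coeFn_smul,
    Pi.smul_apply, lp.coeFn_sub, Pi.sub_apply, rankOne_apply, lp.coeFn_smul, Pi.smul_apply,
    lp.inner_single_left]
  simp [backwardShift_apply, Pi.single_apply]

theorem adjoint_cutShift : adjoint cutShift =
    (2 : ℂ) • ((backwardShift.symm : ℓ²(ℤ, ℂ) →L[ℂ] ℓ²(ℤ, ℂ)) -
      rankOne ℂ (lp.single 2 0 1) (lp.single 2 (-1) 1)) := by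
  rw [cutShift, map_smulₛₗ, map_sub, LinearIsometryEquiv.adjoint_eq_symm, adjoint_rankOne,
    map_ofNat]

theorem adjoint_cutShift_apply (x : ℓ²(ℤ, ℂ)) (n : ℤ) :
    adjoint cutShift x n = 2 * (x (n - 1) - if n = 0 then x (-1) else 0) := by
  rw [adjoint_cutShift, smul_apply, sub_apply,
    lp.coeFn_smul, Pi.smul_apply, lp.coeFn_sub, Pi.sub_apply, rankOne_apply, lp.coeFn_smul,
    Pi.smul_apply, lp.inner_single_left]
  simp [backwardShift_symm_apply, Pi.single_apply]

local notation "M₊" => lp.supportedOn ℂ (fun _ : ℤ => ℂ) 2 (Ici 0)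
local notation "M₋" => lp.supportedOn ℂ (fun _ : ℤ => ℂ) 2 (Iio 0)

theorem mapsTo_cutShift_supportedOn_Ici : MapsTo cutShift (M₊ : Set ℓ²(ℤ, ℂ)) M₊ := by
  intro x hx n hn
  rw [mem_Ici, not_le] at hn
  rw [cutShift_apply]
  by_cases h : n = -1
  · simp [h]
  · simp [h, hx (n + 1) (by rw [mem_Ici]; omega)]

theorem mapsTo_adjoint_cutShift_supportedOn_Iio :
    MapsTo (adjoint cutShift) (M₋ : Set ℓ²(ℤ, ℂ)) M₋ := by
  intro x hx n hn
  rw [mem_Iio, not_lt] at hn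
  rw [adjoint_cutShift_apply]
  by_cases h : n = 0
  · simp [h]
  · simp [h, hx (n - 1) (by rw [mem_Iio]; omega)]

theorem cutShift_smul_backwardShift_symm {y : ℓ²(ℤ, ℂ)} (hy : y ∈ M₊) :
    cutShift ((2⁻¹ : ℂ) • backwardShift.symm y) = y := by
  ext n
  simp only [cutShift_apply, lp.coeFn_smul, Pi.smul_apply, backwardShift_symm_apply]
  by_cases h : n = -1
  · simp [h, hy (-1) (by simp)]
  · simp [h]

theorem adjoint_cutShift_smul_backwardShift {y : ℓ²(ℤ, ℂ)} (hy : y ∈ M₋) :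
    adjoint cutShift ((2⁻¹ : ℂ) • backwardShift y) = y := by
  ext n
  simp only [adjoint_cutShift_apply, lp.coeFn_smul, Pi.smul_apply, backwardShift_apply]
  by_cases h : n = 0
  · simp [h, hy 0 (by simp)]
  · simp [h]

theorem cutShift_single_zero (c : ℂ) : cutShift (lp.single 2 0 c) = 0 := by
  ext n
  simp only [cutShift_apply, lp.single_apply, Pi.single_apply, lp.coeFn_zero, Pi.zero_apply]
  split_ifs <;> first | (exfalso; omega) | ring

theorem cutShift_single_natCast_add_one (k : ℕ) (c : ℂ) :
    cutShift (lp.single 2 ((k : ℤ) + 1) c) = (2 : ℂ) • lp.single 2 (k : ℤ) c := by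
  ext n
  simp only [cutShift_apply, lp.coeFn_smul, Pi.smul_apply, lp.single_apply, Pi.single_apply,
    smul_eq_mul]
  split_ifs <;> first | (exfalso; omega) | ring

theorem adjoint_cutShift_single_neg_one (c : ℂ) :
    adjoint cutShift (lp.single 2 (-1) c) = 0 := by
  ext n
  simp only [adjoint_cutShift_apply, lp.single_apply, Pi.single_apply, lp.coeFn_zero, Pi.zero_apply]
  split_ifs <;> first | (exfalso; omega) | ring

theorem adjoint_cutShift_single_neg_add_two (k : ℕ) (c : ℂ) :
    adjoint cutShift (lp.single 2 (-((k : ℤ) + 2)) c) =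
      (2 : ℂ) • lp.single 2 (-((k : ℤ) + 1)) c := by
  ext n
  simp only [adjoint_cutShift_apply, lp.coeFn_smul, Pi.smul_apply, lp.single_apply, Pi.single_apply,
    smul_eq_mul]
  split_ifs <;> first | (exfalso; omega) | ring

theorem cutShift_pow_single_natCast (k : ℕ) (c : ℂ) :
    (cutShift ^ (k + 1)) (lp.single 2 (k : ℤ) c) = 0 := by
  induction k generalizing c with
  | zero => simpa using cutShift_single_zero c
  | succ k ih =>
    rw [pow_succ, mul_apply_eq_comp, Nat.cast_succ, cutShift_single_natCast_add_one, map_smul, ih,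
      smul_zero]

theorem adjoint_cutShift_pow_single_neg (k : ℕ) (c : ℂ) :
    (adjoint cutShift ^ (k + 1)) (lp.single 2 (-((k : ℤ) + 1)) c) = 0 := by
  induction k generalizing c with
  | zero => simpa using adjoint_cutShift_single_neg_one c
  | succ k ih =>
    rw [pow_succ, mul_apply_eq_comp, Nat.cast_succ, add_assoc, one_add_one_eq_two,
      adjoint_cutShift_single_neg_add_two, map_smul, ih, smul_zero]

theorem exists_cutShift_orbit_dense_in_supportedOn_Ici :
    ∃ x, (M₊ : Set ℓ²(ℤ, ℂ)) ⊆ closure ({y | ∃ n : ℕ, (cutShift ^ n) x = y} ∩ M₊) := by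
  have := lp.separableSpace (α := ℤ) (𝕜 := ℂ) (p := 2) (by norm_num)
  refine ContinuousLinearMap.exists_orbit_dense_in_of_rightInvOn
    (S := (2⁻¹ : ℂ) • (backwardShift.symm : ℓ²(ℤ, ℂ) →L[ℂ] ℓ²(ℤ, ℂ))) (lp.isClosed_supportedOn _)
    mapsTo_cutShift_supportedOn_Ici ?_ (fun y hy => cutShift_smul_backwardShift_symm hy)
    (fun y _ => ContinuousLinearMap.tendsto_pow_apply_zero_of_norm_lt_one ?_ y)
    (lp.supportedOn_subset_closure_tendsto_pow_apply_zero (by norm_num) fun i hi c => ?_)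
  · intro y hy n hn
    simp [backwardShift_symm_apply, hy (n - 1) (by simp_all; omega)]
  · exact backwardShift.symm.norm_smul_toContinuousLinearMap_lt_one (by norm_num)
  · lift i to ℕ using hi
    exact ContinuousLinearMap.tendsto_pow_apply_zero_of_pow_apply_eq_zero
      (cutShift_pow_single_natCast i c)

theorem exists_adjoint_cutShift_orbit_dense_in_supportedOn_Iio :
    ∃ x, (M₋ : Set ℓ²(ℤ, ℂ)) ⊆
      closure ({y | ∃ n : ℕ, (adjoint cutShift ^ n) x = y} ∩ M₋) := by
  have := lp.separableSpace (α := ℤ) (𝕜 := ℂ) (p := 2) (by norm_num)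
  refine ContinuousLinearMap.exists_orbit_dense_in_of_rightInvOn
    (S := (2⁻¹ : ℂ) • (backwardShift : ℓ²(ℤ, ℂ) →L[ℂ] ℓ²(ℤ, ℂ))) (lp.isClosed_supportedOn _)
    mapsTo_adjoint_cutShift_supportedOn_Iio ?_ (fun y hy => adjoint_cutShift_smul_backwardShift hy)
    (fun y _ => ContinuousLinearMap.tendsto_pow_apply_zero_of_norm_lt_one
      (backwardShift.norm_smul_toContinuousLinearMap_lt_one (by norm_num)) y)
    (lp.supportedOn_subset_closure_tendsto_pow_apply_zero (by norm_num) fun i hi c => ?_)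
  · intro y hy n hn
    simp [backwardShift_apply, hy (n + 1) (by simp_all; omega)]
  · obtain ⟨k, rfl⟩ : ∃ k : ℕ, i = -((k : ℤ) + 1) := ⟨(-i - 1).toNat, by simp at hi; omega⟩
    exact ContinuousLinearMap.tendsto_pow_apply_zero_of_pow_apply_eq_zero
      (adjoint_cutShift_pow_single_neg k c)

/-- There exists a bounded linear operator `T` on `ℓ²(ℤ)` and nontrivial closed subspaces
`M₁`, `M₂` such that `T` is `M₁`-hypercyclic and its Hilbert-space adjoint `T*` is
`M₂`-hypercyclic. -/
theorem exists_operator_and_adjoint_subspace_hypercyclic :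
    ∃ (T : lp (fun _ : ℤ => ℂ) 2 →L[ℂ] lp (fun _ : ℤ => ℂ) 2)
      (M₁ M₂ : Submodule ℂ (lp (fun _ : ℤ => ℂ) 2)),
      IsClosed (M₁ : Set (lp (fun _ : ℤ => ℂ) 2)) ∧
      IsClosed (M₂ : Set (lp (fun _ : ℤ => ℂ) 2)) ∧
      M₁ ≠ ⊥ ∧ M₁ ≠ ⊤ ∧ M₂ ≠ ⊥ ∧ M₂ ≠ ⊤ ∧
      (∃ x, (M₁ : Set (lp (fun _ : ℤ => ℂ) 2)) ⊆
        closure ({y | ∃ n : ℕ, (T ^ n) x = y} ∩ (M₁ : Set (lp (fun _ : ℤ => ℂ) 2)))) ∧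
      (∃ x, (M₂ : Set (lp (fun _ : ℤ => ℂ) 2)) ⊆
        closure ({y | ∃ n : ℕ, ((ContinuousLinearMap.adjoint T) ^ n) x = y} ∩
          (M₂ : Set (lp (fun _ : ℤ => ℂ) 2)))) :=
  ⟨cutShift, M₊, M₋, lp.isClosed_supportedOn _, lp.isClosed_supportedOn _,
    lp.supportedOn_ne_bot ⟨0, by simp⟩, lp.supportedOn_ne_top (i := -1) (by simp),
    lp.supportedOn_ne_bot ⟨-1, by simp⟩, lp.supportedOn_ne_top (i := 0) (by simp),
    exists_cutShift_orbit_dense_in_supportedOn_Ici,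
    exists_adjoint_cutShift_orbit_dense_in_supportedOn_Iio⟩
end
end

section
/- Let T be the bilateral forward weighted shift on ℓ²(ℤ) with weights w_n = 1/2 for n ≥ 0 and w_n = 3 for n < 0, and let M = {a ∈ ℓ²(ℤ) : a_{2n} = 0 for all n ∈ ℤ} be the closed subspace of sequences vanishing at even indices. Then T^{2k}(M) ⊆ M for all k ∈ ℕ, ∏_{j=1}^{2k} w_j → 0, and ∏_{j=-1}^{-2k} (1/w_j) → 0 as k → ∞; consequently T is M-hypercyclic. -/
open Filter Set TopologicalSpace Submodule
open scoped Topology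

/-! Subspace-hypercyclicity criterion with `n_k = 2k` on the span `D` of the odd basis vectors
`e_i`, which is dense in `M`. Since the weights are eventually `1/2` to the right,
`T^{2k} e_i = (∏ w) e_{i+2k} → 0`; since they are eventually `3` to the left, `e_i` has the
preimage `(∏ 1/w) e_{i-2k} ∈ M` under `T^{2k}`, and these preimages tend to `0`. Adding them to
points of `D` carries every open subset of `M` into every other one by some `T^{2k}`, so Baire's
theorem in the complete separable space `M` (Birkhoff's transitivity argument) yields a vector
whose even iterates are dense in `M`. -/

theorem tendsto_prod_range_nhds_zero_of_eventually_eq {R : Type*} [NormedCommRing R]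
    {f : ℕ → R} {c : R} (N : ℕ) (hf : ∀ j ≥ N, f j = c) (hc : ‖c‖ < 1) :
    Tendsto (fun n => ∏ j ∈ Finset.range n, f j) atTop (𝓝 0) := by
  rw [← tendsto_add_atTop_iff_nat N]
  have hsplit : ∀ m, ∏ j ∈ Finset.range (m + N), f j = (∏ j ∈ Finset.range N, f j) * c ^ m := by
    intro m
    rw [add_comm, Finset.prod_range_add, Finset.prod_congr rfl fun j _ => hf (N + j) le_self_add,
      Finset.prod_const, Finset.card_range]
  simp only [hsplit]
  simpa using (tendsto_pow_atTop_nhds_zero_of_norm_lt_one hc).const_mul (∏ j ∈ Finset.range N, f j)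

theorem exists_denseRange_apply_of_transitive {X ι : Type*} [TopologicalSpace X] [BaireSpace X]
    [SecondCountableTopology X] [Nonempty X] {f : ι → X → X} (hf : ∀ k, Continuous (f k))
    (htrans : ∀ U V : Set X, IsOpen U → IsOpen V → U.Nonempty → V.Nonempty →
      ∃ k, (U ∩ f k ⁻¹' V).Nonempty) :
    ∃ x, DenseRange fun k => f k x := by
  obtain ⟨b, hbc, hbe, hb⟩ := exists_countable_basis X
  have hG : Dense (⋂ V ∈ b, ⋃ k, f k ⁻¹' V) := by
    refine dense_biInter_of_isOpen
      (fun V hV => isOpen_iUnion fun k => (hb.isOpen hV).preimage (hf k))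
      hbc fun V hV => dense_iff_inter_open.2 fun U hU hUne => ?_
    have hVne : V.Nonempty := nonempty_iff_ne_empty.2 (ne_of_mem_of_not_mem hV hbe)
    obtain ⟨k, x, hxU, hxV⟩ := htrans U V hU (hb.isOpen hV) hUne hVne
    exact ⟨x, hxU, mem_iUnion.2 ⟨k, hxV⟩⟩
  obtain ⟨x, hx⟩ := hG.nonempty
  refine ⟨x, hb.dense_iff.2 fun V hV _ => ?_⟩
  obtain ⟨k, hk⟩ := mem_iUnion.1 (mem_iInter₂.1 hx V hV)
  exact ⟨f k x, hk, k, rfl⟩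

section Criterion

variable {𝕜 E : Type*} [NormedField 𝕜] [NormedAddCommGroup E] [NormedSpace 𝕜 E]

def IsSubspaceHypercyclic (T : E →L[𝕜] E) (M : Submodule 𝕜 E) : Prop :=
  ∃ x : E, (M : Set E) ⊆ closure (range (fun n : ℕ => (T ^ n) x) ∩ M)

theorem isSubspaceHypercyclic_of_criterion [CompleteSpace E] [SeparableSpace E]
    {T : E →L[𝕜] E} {M : Submodule 𝕜 E} (hM : IsClosed (M : Set E)) {n : ℕ → ℕ}
    (hMT : ∀ k, ∀ x ∈ M, (T ^ n k) x ∈ M) {D₁ D₂ : Set E} (hD₁M : D₁ ⊆ M) (hD₂M : D₂ ⊆ M)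
    (hMD₁ : (M : Set E) ⊆ closure D₁) (hMD₂ : (M : Set E) ⊆ closure D₂)
    (hD₁ : ∀ x ∈ D₁, Tendsto (fun k => (T ^ n k) x) atTop (𝓝 0))
    (hD₂ : ∀ y ∈ D₂, ∃ u : ℕ → E, (∀ k, u k ∈ M) ∧ Tendsto u atTop (𝓝 0) ∧
      Tendsto (fun k => (T ^ n k) (u k)) atTop (𝓝 y)) :
    IsSubspaceHypercyclic T M := by
  have : CompleteSpace M := hM.completeSpace_coe
  have hdense : ∀ D ⊆ (M : Set E), (M : Set E) ⊆ closure D → Dense ((↑) ⁻¹' D : Set M) :=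
    fun D hDM hMD => dense_iff_inter_open.2 fun U hU ⟨m, hm⟩ => by
      obtain ⟨U', hU', rfl⟩ := isOpen_induced_iff.1 hU
      obtain ⟨d, hdU, hdD⟩ := mem_closure_iff.1 (hMD m.2) U' hU' hm
      exact ⟨⟨d, hDM hdD⟩, hdU, hdD⟩
  let f : ℕ → M → M := fun k x => ⟨(T ^ n k) x, hMT k x x.2⟩
  have hf : ∀ k, Continuous (f k) := fun k =>
    ((T ^ n k).continuous.comp continuous_subtype_val).subtype_mk _
  obtain ⟨x₀, hx₀⟩ := exists_denseRange_apply_of_transitive hf fun U V hU hV hUne hVne => by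
    obtain ⟨⟨x, hxM⟩, hxU, hxD⟩ := (hdense D₁ hD₁M hMD₁).inter_open_nonempty U hU hUne
    obtain ⟨⟨y, hyM⟩, hyV, hyD⟩ := (hdense D₂ hD₂M hMD₂).inter_open_nonempty V hV hVne
    obtain ⟨u, huM, hu, hTu⟩ := hD₂ y hyD
    let z : ℕ → M := fun k => ⟨x + u k, M.add_mem hxM (huM k)⟩
    have hz : Tendsto z atTop (𝓝 ⟨x, hxM⟩) :=
      tendsto_subtype_rng.2 (by simpa using tendsto_const_nhds.add hu)
    have hfz : Tendsto (fun k => f k (z k)) atTop (𝓝 ⟨y, hyM⟩) :=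
      tendsto_subtype_rng.2 (by simpa [f, z] using (hD₁ x hxD).add hTu)
    obtain ⟨k, hzU, hfzV⟩ := ((hz.eventually (hU.mem_nhds hxU)).and
      (hfz.eventually (hV.mem_nhds hyV))).exists
    exact ⟨k, z k, hzU, hfzV⟩
  refine ⟨x₀, fun y hy => closure_mono ?_ (closure_subtype.1 (hx₀ (⟨y, hy⟩ : M)))⟩
  rintro _ ⟨_, ⟨k, rfl⟩, rfl⟩
  exact ⟨⟨n k, rfl⟩, (f k x₀).2⟩

end Criterion

section SpanLimits

variable {𝕜 E F ι : Type*} [NormedField 𝕜] [NormedAddCommGroup E] [NormedSpace 𝕜 E]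
  [NormedAddCommGroup F] [NormedSpace 𝕜 F] {l : Filter ι} {L : ι → E →L[𝕜] F}

theorem tendsto_apply_nhds_zero_of_mem_span {s : Set E}
    (hs : ∀ x ∈ s, Tendsto (fun k => L k x) l (𝓝 0)) {x : E} (hx : x ∈ span 𝕜 s) :
    Tendsto (fun k => L k x) l (𝓝 0) := by
  induction hx using Submodule.span_induction with
  | mem x hx => exact hs x hx
  | zero => simpa using tendsto_const_nhds
  | add x y _ _ hx hy => simpa using hx.add hy
  | smul c x _ hx => simpa using hx.const_smul c

theorem exists_tendsto_apply_of_mem_span {M : Submodule 𝕜 E} {s : Set F}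
    (hs : ∀ y ∈ s, ∃ u : ι → E, (∀ k, u k ∈ M) ∧ Tendsto u l (𝓝 0) ∧
      Tendsto (fun k => L k (u k)) l (𝓝 y))
    {y : F} (hy : y ∈ span 𝕜 s) :
    ∃ u : ι → E, (∀ k, u k ∈ M) ∧ Tendsto u l (𝓝 0) ∧ Tendsto (fun k => L k (u k)) l (𝓝 y) := by
  induction hy using Submodule.span_induction with
  | mem y hy => exact hs y hy
  | zero => exact ⟨0, fun _ => M.zero_mem, tendsto_const_nhds, by simpa using tendsto_const_nhds⟩
  | add y z _ _ hy hz =>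
    obtain ⟨u, huM, hu, hLu⟩ := hy
    obtain ⟨v, hvM, hv, hLv⟩ := hz
    exact ⟨fun k => u k + v k, fun k => M.add_mem (huM k) (hvM k), by simpa using hu.add hv,
      by simpa using hLu.add hLv⟩
  | smul c y _ hy =>
    obtain ⟨u, huM, hu, hLu⟩ := hy
    exact ⟨fun k => c • u k, fun k => M.smul_mem c (huM k), by simpa using hu.const_smul c,
      by simpa using hLu.const_smul c⟩

end SpanLimits

section lp

variable {α 𝕜 : Type*} [NormedField 𝕜] {p : ENNReal} [Fact (1 ≤ p)]

theorem lp.mem_closure_span_single [DecidableEq α] (hp : p ≠ ⊤) {S : Set α}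
    (x : lp (fun _ : α => 𝕜) p) (hx : ∀ i ∉ S, x i = 0) :
    x ∈ closure (span 𝕜 ((fun i => lp.single p i (1 : 𝕜)) '' S) :
      Set (lp (fun _ : α => 𝕜) p)) := by
  refine mem_closure_of_tendsto (lp.hasSum_single hp x) (Eventually.of_forall fun s => ?_)
  refine Submodule.sum_mem _ fun i _ => ?_
  by_cases hi : i ∈ S
  · rw [← mul_one (x i), ← smul_eq_mul, lp.single_smul]
    exact Submodule.smul_mem _ _ (subset_span (mem_image_of_mem _ hi))
  · rw [hx i hi, lp.single_zero]
    exact Submodule.zero_mem _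

theorem lp.separableSpace_s9 [Countable α] [SeparableSpace 𝕜] (hp : p ≠ ⊤) :
    SeparableSpace (lp (fun _ : α => 𝕜) p) := by
  classical
  have hsingles : IsSeparable (range fun i : α => lp.single p i (1 : 𝕜)) :=
    (countable_range _).isSeparable
  rw [← isSeparable_univ_iff]
  refine (hsingles.span (R := 𝕜)).closure.mono fun x _ => ?_
  simpa using lp.mem_closure_span_single hp (S := univ) x (by simp)

end lp

local notation "ℓ²" => lp (fun _ : ℤ => ℂ) 2

def IsWeightedShift (w : ℤ → ℝ) (T : ℓ² →L[ℂ] ℓ²) : Prop :=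
  ∀ n : ℤ, T (lp.single 2 n 1) = (w n : ℂ) • lp.single 2 (n + 1) 1

namespace IsWeightedShift

variable {w : ℤ → ℝ} {T : ℓ² →L[ℂ] ℓ²}

theorem pow_single (hT : IsWeightedShift w T) (n : ℕ) (i : ℤ) :
    (T ^ n) (lp.single 2 i 1) =
      (∏ j ∈ Finset.range n, (w (i + j) : ℂ)) • lp.single 2 (i + n) 1 := by
  induction n generalizing i with
  | zero => simp
  | succ n ih =>
    rw [pow_succ, mul_apply_eq_comp, hT, map_smul, ih, smul_smul,
      Finset.prod_range_succ']
    push_cast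
    simp only [add_zero, add_assoc, add_comm (1 : ℤ), mul_comm]

theorem pow_smul_single_sub (hT : IsWeightedShift w T) (hw : ∀ i, w i ≠ 0) (n : ℕ) (i : ℤ) :
    (T ^ n) ((∏ j ∈ Finset.range n, (w (i - 1 - j) : ℂ)⁻¹) • lp.single 2 (i - n) 1) =
      lp.single 2 i 1 := by
  have hreflect : ∏ j ∈ Finset.range n, (w (i - n + j) : ℂ) =
      ∏ j ∈ Finset.range n, (w (i - 1 - j) : ℂ) := by
    rw [← Finset.prod_range_reflect]
    refine Finset.prod_congr rfl fun j hj => ?_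
    have hcast : ((n - 1 - j : ℕ) : ℤ) = n - 1 - j := by have := Finset.mem_range.1 hj; omega
    rw [hcast]
    ring_nf
  rw [map_smul, hT.pow_single, smul_smul, sub_add_cancel, hreflect, ← Finset.prod_mul_distrib,
    Finset.prod_eq_one fun j _ => inv_mul_cancel₀ (by exact_mod_cast hw _), one_smul]

end IsWeightedShift

noncomputable def salasWeight (n : ℤ) : ℝ := if 0 ≤ n then 1 / 2 else 3

theorem salasWeight_ne_zero (n : ℤ) : salasWeight n ≠ 0 := by
  unfold salasWeight; split_ifs <;> norm_num

theorem tendsto_prod_salasWeight (i : ℤ) :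
    Tendsto (fun n : ℕ => ∏ j ∈ Finset.range n, salasWeight (i + j)) atTop (𝓝 0) :=
  tendsto_prod_range_nhds_zero_of_eventually_eq (c := 1 / 2) (-i).toNat
    (fun j hj => if_pos (by omega)) (by norm_num)

theorem tendsto_prod_inv_salasWeight (i : ℤ) :
    Tendsto (fun n : ℕ => ∏ j ∈ Finset.range n, (salasWeight (i - 1 - j))⁻¹) atTop (𝓝 0) :=
  tendsto_prod_range_nhds_zero_of_eventually_eq (c := 3⁻¹) i.toNat
    (fun j hj => by rw [salasWeight, if_neg (by omega)]) (by norm_num)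

theorem tendsto_smul_single_nhds_zero {c : ℕ → ℂ} (hc : Tendsto c atTop (𝓝 0)) (m : ℕ → ℤ) :
    Tendsto (fun n => c n • lp.single 2 (m n) (1 : ℂ)) atTop (𝓝 (0 : ℓ²)) := by
  rw [tendsto_zero_iff_norm_tendsto_zero]
  simpa [norm_smul] using hc.norm

def oddSingles : Set ℓ² := (fun i => lp.single 2 i (1 : ℂ)) '' {i | Odd i}

section OddSubspace

variable {M : Submodule ℂ ℓ²}

theorem isClosed_of_mem_iff_apply_two_mul_eq_zero (hM : ∀ x : ℓ², x ∈ M ↔ ∀ n : ℤ, x (2 * n) = 0) :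
    IsClosed (M : Set ℓ²) := by
  have hMeq : (M : Set ℓ²) = ⋂ n : ℤ, {x | x (2 * n) = 0} := by
    ext x
    simp [hM]
  rw [hMeq]
  exact isClosed_iInter fun n =>
    isClosed_eq (lp.lipschitzWith_one_eval 2 (2 * n)).continuous continuous_const

theorem single_mem_of_odd (hM : ∀ x : ℓ², x ∈ M ↔ ∀ n : ℤ, x (2 * n) = 0) {i : ℤ} (hi : Odd i)
    (a : ℂ) : lp.single 2 i a ∈ M :=
  (hM _).2 fun n => lp.single_apply_ne _ _ _ fun h => Int.not_even_iff_odd.2 hi ⟨n, by omega⟩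

theorem span_oddSingles_le (hM : ∀ x : ℓ², x ∈ M ↔ ∀ n : ℤ, x (2 * n) = 0) :
    span ℂ oddSingles ≤ M :=
  span_le.2 <| by
    rintro _ ⟨i, hi, rfl⟩
    exact single_mem_of_odd hM hi 1

theorem subset_closure_span_oddSingles (hM : ∀ x : ℓ², x ∈ M ↔ ∀ n : ℤ, x (2 * n) = 0) :
    (M : Set ℓ²) ⊆ closure (span ℂ oddSingles) := fun x hx =>
  lp.mem_closure_span_single (by norm_num) x fun i hi => by
    obtain ⟨n, rfl⟩ := Int.not_odd_iff_even.1 hi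
    simpa [two_mul] using (hM x).1 hx n

end OddSubspace

section SalasShift

variable {T : ℓ² →L[ℂ] ℓ²} {M : Submodule ℂ ℓ²}

theorem pow_two_mul_apply_mem {w : ℤ → ℝ} (hT : IsWeightedShift w T)
    (hM : ∀ x : ℓ², x ∈ M ↔ ∀ n : ℤ, x (2 * n) = 0) (k : ℕ) :
    ∀ x ∈ M, (T ^ (2 * k)) x ∈ M := by
  have hspan : span ℂ oddSingles ≤ M.comap (T ^ (2 * k)).toLinearMap := span_le.2 <| by
    rintro _ ⟨i, hi, rfl⟩
    show (T ^ (2 * k)) (lp.single 2 i 1) ∈ M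
    rw [hT.pow_single]
    exact M.smul_mem _ (single_mem_of_odd hM (by push_cast; exact hi.add_even (even_two_mul _)) 1)
  have hmaps : MapsTo (T ^ (2 * k)) (span ℂ oddSingles) M := fun x hx => hspan hx
  exact (hmaps.closure_left (T ^ (2 * k)).continuous
    (isClosed_of_mem_iff_apply_two_mul_eq_zero hM)).mono_left (subset_closure_span_oddSingles hM)

theorem tendsto_pow_two_mul_single (hT : IsWeightedShift salasWeight T) (i : ℤ) :
    Tendsto (fun k : ℕ => (T ^ (2 * k)) (lp.single 2 i 1)) atTop (𝓝 0) := by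
  simp only [hT.pow_single]
  refine tendsto_smul_single_nhds_zero ?_ _
  simpa [Function.comp_def] using
    ((Complex.continuous_ofReal.tendsto 0).comp (tendsto_prod_salasWeight i)).comp
      (tendsto_id.const_mul_atTop' two_pos)

theorem exists_tendsto_pow_two_mul_eq_single (hT : IsWeightedShift salasWeight T)
    (hM : ∀ x : ℓ², x ∈ M ↔ ∀ n : ℤ, x (2 * n) = 0) {i : ℤ} (hi : Odd i) :
    ∃ u : ℕ → ℓ², (∀ k, u k ∈ M) ∧ Tendsto u atTop (𝓝 0) ∧
      Tendsto (fun k => (T ^ (2 * k)) (u k)) atTop (𝓝 (lp.single 2 i 1)) := by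
  refine ⟨fun k => (∏ j ∈ Finset.range (2 * k), (salasWeight (i - 1 - j) : ℂ)⁻¹) •
    lp.single 2 (i - (2 * k : ℕ)) 1, fun k => ?_, ?_, ?_⟩
  · exact M.smul_mem _ (single_mem_of_odd hM (by push_cast; exact hi.sub_even (even_two_mul _)) 1)
  · refine tendsto_smul_single_nhds_zero ?_ _
    simpa [Function.comp_def] using
      ((Complex.continuous_ofReal.tendsto 0).comp (tendsto_prod_inv_salasWeight i)).comp
        (tendsto_id.const_mul_atTop' two_pos)
  · simp only [hT.pow_smul_single_sub salasWeight_ne_zero]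
    exact tendsto_const_nhds

end SalasShift

/-- For the bilateral forward shift with weights `w_n = 1/2` (`n ≥ 0`), `w_n = 3` (`n < 0`) and
`M` the subspace of sequences vanishing at even indices: `T^{2k}(M) ⊆ M` for all `k`,
`∏_{j=1}^{2k} w_j → 0`, `∏_{j=-1}^{-2k} (1/w_j) → 0`, and consequently `T` is `M`-hypercyclic. -/
theorem salas_type_shift_subspace_hypercyclic
    (w : ℤ → ℝ) (hw : ∀ n : ℤ, w n = if 0 ≤ n then (1 / 2 : ℝ) else 3)
    (T : lp (fun _ : ℤ => ℂ) 2 →L[ℂ] lp (fun _ : ℤ => ℂ) 2)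
    (hT : ∀ n : ℤ, T (lp.single 2 n (1 : ℂ)) = (w n : ℂ) • lp.single 2 (n + 1) (1 : ℂ))
    (M : Submodule ℂ (lp (fun _ : ℤ => ℂ) 2))
    (hM : ∀ x : lp (fun _ : ℤ => ℂ) 2, x ∈ M ↔ ∀ n : ℤ, x (2 * n) = 0) :
    (∀ k : ℕ, ∀ x ∈ M, (T ^ (2 * k)) x ∈ M) ∧
    Tendsto (fun k : ℕ => ∏ j ∈ Finset.range (2 * k), w (1 + j)) atTop (𝓝 0) ∧
    Tendsto (fun k : ℕ => ∏ j ∈ Finset.range (2 * k), (w (-1 - j))⁻¹) atTop (𝓝 0) ∧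
    ∃ x : lp (fun _ : ℤ => ℂ) 2,
      (M : Set (lp (fun _ : ℤ => ℂ) 2)) ⊆
        closure ({y | ∃ n : ℕ, (T ^ n) x = y} ∩ (M : Set (lp (fun _ : ℤ => ℂ) 2))) := by
  obtain rfl : w = salasWeight := funext hw
  have htwo : Tendsto (fun k : ℕ => 2 * k) atTop atTop := tendsto_id.const_mul_atTop' two_pos
  have : SeparableSpace ℓ² := lp.separableSpace_s9 (by norm_num)
  refine ⟨pow_two_mul_apply_mem hT hM, (tendsto_prod_salasWeight 1).comp htwo,
    by simpa [Function.comp_def] using (tendsto_prod_inv_salasWeight 0).comp htwo, ?_⟩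
  exact isSubspaceHypercyclic_of_criterion (isClosed_of_mem_iff_apply_two_mul_eq_zero hM)
    (pow_two_mul_apply_mem hT hM)
    (span_oddSingles_le hM) (span_oddSingles_le hM) (subset_closure_span_oddSingles hM)
    (subset_closure_span_oddSingles hM)
    (fun x hx => tendsto_apply_nhds_zero_of_mem_span
      (by rintro _ ⟨i, -, rfl⟩; exact tendsto_pow_two_mul_single hT i) hx)
    (fun y hy => exists_tendsto_apply_of_mem_span
      (by rintro _ ⟨i, hi, rfl⟩; exact exists_tendsto_pow_two_mul_eq_single hT hM hi) hy)
end
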